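/- Type preservation for field write on pooled objects: if (Γ, X, Φ) is well-formed, Γ types x at C<ys> and x' at the substituted type of field f, Φ(x) = (π, n), and the write rule updates the heap to X' by setting κs[i][n][j] := Φ(x') where (i,j) = W(L, f), then X' is a well-formed heap and (Γ, X', Φ) is well-formed. -/

import Mathlib

namespace Shapes

abbrev FieldId := ℕ
abbrev VarId := ℕ
abbrev ClassId := ℕ
abbrev LayoutId := ℕ
abbrev MethodId := ℕ

/-- A pool address: `none` is the global none-pool, `some n` a heap pool address. -/
abbrev PoolAddr := Option ℕ

inductive Value where
  | null
  | obj (ω : ℕ)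
  | loc (π : ℕ) (n : ℕ)
deriving DecidableEq

/-- A pool variable: `none` is the `none` keyword. -/
abbrev PoolVar := Option VarId

inductive RVal where
  | val (v : Value)
  | pool (π : PoolAddr)
deriving DecidableEq

abbrev Frame := VarId → Option RVal

/-- The value of a pool variable in a frame. -/
def poolOf (Φ : Frame) : PoolVar → Option PoolAddr
  | none => some none
  | some y => match Φ y with
    | some (RVal.pool π) => some π
    | _ => none

structure Obj where
  cls : ClassId
  params : List PoolAddr
  record : List Value

structure Pool where
  layout : LayoutId
  params : List PoolAddr
  clusters : List (List (List Value))

abbrev Heap := ℕ → Option (Obj ⊕ Pool)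

inductive Expr where
  | null
  | var (x : VarId)
  | newE (C : ClassId) (ys : List PoolVar)
  | call (x : VarId) (m : MethodId) (x' : VarId)
  | read (x : VarId) (f : FieldId)
  | write (x : VarId) (f : FieldId) (x' : VarId)
  | assign (x : VarId) (e : Expr)

structure MethodDecl where
  param : VarId
  paramTy : ClassId × List PoolVar
  retTy : ClassId × List PoolVar
  pools : List (VarId × LayoutId × List PoolVar)
  locals : List (VarId × ClassId × List PoolVar)
  body : Expr

structure ClassDecl where
  params : List (VarId × ClassId × List PoolVar)
  fields : List (FieldId × ClassId × List PoolVar)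
  methods : List MethodDecl

structure LayoutDecl where
  cls : ClassId
  clusters : List (List FieldId)

structure Program where
  classes : ClassId → Option ClassDecl
  layouts : LayoutId → Option LayoutDecl

def owners (cd : ClassDecl) : List VarId := cd.params.map (·.1)

def layoutClass (P : Program) (L : LayoutId) : Option ClassId :=
  (P.layouts L).map (·.cls)

def flookup (cd : ClassDecl) (f : FieldId) : Option (ClassId × List PoolVar) :=
  (cd.fields.find? (fun p => p.1 == f)).map (·.2)

def fieldsOf (cd : ClassDecl) : List FieldId := cd.fields.map (·.1)

def mlookup (cd : ClassDecl) (m : MethodId) : Option MethodDecl := cd.methods[m]?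

/-- Offset of a field in an unpooled object. -/
def offsetC (cd : ClassDecl) (f : FieldId) : Option ℕ :=
  (fieldsOf cd).idxOf? f

/-- Offset `(i, j)` of a field in a layout: cluster index `i`, position `j`. -/
def offsetL (ld : LayoutDecl) (f : FieldId) : Option (ℕ × ℕ) :=
  (ld.clusters.findIdx? (fun κ => κ.contains f)).bind fun i =>
    ((ld.clusters.getD i []).idxOf? f).map fun j => (i, j)

/-- Substitution of formal pool parameters by pool addresses. -/
def substPA (formals : List VarId) (πs : List PoolAddr) : PoolVar → PoolAddr
  | none => none
  | some y => match formals.idxOf? y with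
    | some i => πs.getD i none
    | none => none

/-- Substitution of formal pool parameters by pool variables (actuals). -/
def substPV (formals : List VarId) (actuals : List PoolVar) : PoolVar → PoolVar
  | none => none
  | some y => match formals.idxOf? y with
    | some i => actuals.getD i none
    | none => none

/-- Weak agreement of a value with a runtime class type `C<πs>`. -/
def wagreeVal (P : Program) (X : Heap) : Value → ClassId → List PoolAddr → Prop
  | .null, _, _ => True
  | .obj ω, C, πs => ∃ o, X ω = some (.inl o) ∧ o.cls = C ∧ o.params = πs ∧
      πs.head? ≠ some none
  | .loc π _, C, πs => ∃ p, X π = some (.inr p) ∧ p.params = πs ∧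
      πs.head? = some (some π) ∧ layoutClass P p.layout = some C

/-- Weak agreement of a pool address with a runtime bound `[C<πs>]`. -/
def wagreeBound (P : Program) (X : Heap) : PoolAddr → ClassId → List PoolAddr → Prop
  | none, _, _ => True
  | some π, C, πs => ∃ p, X π = some (.inr p) ∧ p.params = πs ∧
      πs.head? = some (some π) ∧ layoutClass P p.layout = some C

/-- Weak agreement of a pool address with a runtime pool type `L<πs>`. -/
def wagreePoolTy (P : Program) (X : Heap) (_π : PoolAddr) (L : LayoutId)
    (πs : List PoolAddr) : Prop :=
  ∃ π₀ p, πs.head? = some (some π₀) ∧ X π₀ = some (.inr p) ∧ p.layout = L ∧ p.params = πs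

def paramsAgree (P : Program) (X : Heap) (cd : ClassDecl) (πs : List PoolAddr) : Prop :=
  ∀ i (h : i < cd.params.length),
    wagreeBound P X (πs.getD i none)
      (cd.params.get ⟨i, h⟩).2.1
      ((cd.params.get ⟨i, h⟩).2.2.map (substPA (owners cd) πs))

def fieldsAgreeRec (P : Program) (X : Heap) (cd : ClassDecl) (πs : List PoolAddr)
    (ρ : List Value) : Prop :=
  ∀ i (h : i < cd.fields.length),
    wagreeVal P X (ρ.getD i .null)
      (cd.fields.get ⟨i, h⟩).2.1
      ((cd.fields.get ⟨i, h⟩).2.2.map (substPA (owners cd) πs))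

/-- The value at cluster `i`, object index `n`, slot `j`. -/
def cluster3 (κs : List (List (List Value))) (i n j : ℕ) : Value :=
  ((κs.getD i []).getD n []).getD j .null

/-- Strong agreement of the pooled object at `(π, n)` with `C<πs>`. -/
def sagreeLoc (P : Program) (X : Heap) (π n : ℕ) (C : ClassId) (πs : List PoolAddr) : Prop :=
  ∃ p cd ld, X π = some (.inr p) ∧ p.params = πs ∧ πs.head? = some (some π) ∧
    P.layouts p.layout = some ld ∧ ld.cls = C ∧ P.classes C = some cd ∧
    ∀ f i j D zs, offsetL ld f = some (i, j) → flookup cd f = some (D, zs) →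
      wagreeVal P X (cluster3 p.clusters i n j) D (zs.map (substPA (owners cd) πs))

/-- Strong agreement of the unpooled object at `ω` with `C<πs>`. -/
def sagreeObjAddr (P : Program) (X : Heap) (ω : ℕ) (C : ClassId) (πs : List PoolAddr) : Prop :=
  ∃ o cd, X ω = some (.inl o) ∧ o.cls = C ∧ o.params = πs ∧ πs.head? = some none ∧
    P.classes C = some cd ∧ paramsAgree P X cd πs ∧ fieldsAgreeRec P X cd πs o.record

/-- Strong agreement of the pool at `π` with `L<πs>`. -/
def sagreePoolAddr (P : Program) (X : Heap) (π : ℕ) (L : LayoutId) (πs : List PoolAddr) : Prop :=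
  ∃ p ld cd, X π = some (.inr p) ∧ p.layout = L ∧ p.params = πs ∧
    πs.head? = some (some π) ∧
    P.layouts L = some ld ∧ P.classes ld.cls = some cd ∧
    paramsAgree P X cd πs ∧
    (∀ κ ∈ p.clusters, κ.length = (p.clusters.headD []).length) ∧
    (∀ n, n < (p.clusters.headD []).length → sagreeLoc P X π n ld.cls πs)

/-- A well-formed heap: every address strongly agrees with some runtime type. -/
def wfHeap (P : Program) (X : Heap) : Prop :=
  ∀ a e, X a = some e →
    (∃ C πs, sagreeObjAddr P X a C πs) ∨ (∃ L πs, sagreePoolAddr P X a L πs)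

inductive Ty where
  | obj (C : ClassId) (ys : List PoolVar)
  | pool (L : LayoutId) (ys : List PoolVar)
  | bound (C : ClassId) (ys : List PoolVar)
deriving DecidableEq

abbrev Ctx := VarId → Option Ty

mutual
/-- Well-formedness of the bound `[C<ys>]` in a context. -/
inductive WfBound (P : Program) (Γ : Ctx) : ClassId → List PoolVar → Prop where
  | mk : ∀ C ys cd, P.classes C = some cd →
      (∀ i (h : i < cd.params.length),
        PoolBoundTy P Γ (ys.getD i none)
          (cd.params.get ⟨i, h⟩).2.1
          ((cd.params.get ⟨i, h⟩).2.2.map (substPV (owners cd) ys))) →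
      WfBound P Γ C ys

/-- A pool variable has a given bound type. -/
inductive PoolBoundTy (P : Program) (Γ : Ctx) : PoolVar → ClassId → List PoolVar → Prop where
  | noneB : ∀ C ys, WfBound P Γ C ys → PoolBoundTy P Γ none C ys
  | fromBound : ∀ v C ys, Γ v = some (.bound C ys) → PoolBoundTy P Γ (some v) C ys
  | fromPool : ∀ v L C ys, Γ v = some (.pool L ys) → layoutClass P L = some C →
      PoolBoundTy P Γ (some v) C ys
end

def WfObjTy (P : Program) (Γ : Ctx) (C : ClassId) (ys : List PoolVar) : Prop :=
  WfBound P Γ C ys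

def WfPoolTy (P : Program) (Γ : Ctx) (L : LayoutId) (ys : List PoolVar) : Prop :=
  ∃ C, WfBound P Γ C ys ∧ layoutClass P L = some C

/-- Expression typing: `Γ ⊢ e : C<ys>`. -/
inductive HasTy (P : Program) (Γ : Ctx) : Expr → ClassId → List PoolVar → Prop where
  | null : ∀ C ys, WfBound P Γ C ys → HasTy P Γ .null C ys
  | var : ∀ x C ys, Γ x = some (.obj C ys) → HasTy P Γ (.var x) C ys
  | assign : ∀ x e C ys, Γ x = some (.obj C ys) → HasTy P Γ e C ys →
      HasTy P Γ (.assign x e) C ys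
  | newE : ∀ C ys, WfBound P Γ C ys → HasTy P Γ (.newE C ys) C ys
  | read : ∀ x f C ys cd D zs, Γ x = some (.obj C ys) → P.classes C = some cd →
      flookup cd f = some (D, zs) →
      HasTy P Γ (.read x f) D (zs.map (substPV (owners cd) ys))
  | write : ∀ x f x' C ys cd D zs, Γ x = some (.obj C ys) → P.classes C = some cd →
      flookup cd f = some (D, zs) →
      Γ x' = some (.obj D (zs.map (substPV (owners cd) ys))) →
      HasTy P Γ (.write x f x') D (zs.map (substPV (owners cd) ys))
  | call : ∀ x m x' C ys cd md, Γ x = some (.obj C ys) → P.classes C = some cd →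
      mlookup cd m = some md →
      Γ x' = some (.obj md.paramTy.1 (md.paramTy.2.map (substPV (owners cd) ys))) →
      HasTy P Γ (.call x m x') md.retTy.1 (md.retTy.2.map (substPV (owners cd) ys))

/-- A run-time value agrees with a (static) type instantiated via the frame. -/
def agreeTy (P : Program) (X : Heap) (Φ : Frame) (r : RVal) : Ty → Prop
  | .obj C ys => ∃ v πs, r = .val v ∧ ys.mapM (poolOf Φ) = some πs ∧ wagreeVal P X v C πs
  | .pool L ys => ∃ π πs, r = .pool π ∧ ys.mapM (poolOf Φ) = some πs ∧
      wagreePoolTy P X π L πs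
  | .bound C ys => ∃ π πs, r = .pool π ∧ ys.mapM (poolOf Φ) = some πs ∧
      wagreeBound P X π C πs

/-- Well-formed configuration `Γ ⊢ X, Φ`. -/
def wfConfig (P : Program) (Γ : Ctx) (X : Heap) (Φ : Frame) : Prop :=
  wfHeap P X ∧ (∀ x, (Γ x).isSome ↔ (Φ x).isSome) ∧
  ∀ x T, Γ x = some T → ∃ r, Φ x = some r ∧ agreeTy P X Φ r T

def updHeap (X : Heap) (a : ℕ) (e : Obj ⊕ Pool) : Heap :=
  fun b => if b = a then some e else X b

def updFrame (Φ : Frame) (x : VarId) (r : RVal) : Frame :=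
  fun z => if z = x then some r else Φ z

def updCtx (Γ : Ctx) (x : VarId) (T : Ty) : Ctx :=
  fun z => if z = x then some T else Γ z

/-- `this` is a distinguished variable. -/
def thisVar : VarId := 0

/-- Append one fresh record of nulls to each cluster (pooled allocation). -/
def appendNulls (κs : List (List (List Value))) (fss : List (List FieldId)) :
    List (List (List Value)) :=
  List.zipWith (fun κ fs => κ ++ [List.replicate fs.length Value.null]) κs fss

/-- Update slot `(i, n, j)` in the clusters of a pool. -/
def setCluster (κs : List (List (List Value))) (i n j : ℕ) (v : Value) :
    List (List (List Value)) :=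
  κs.set i ((κs.getD i []).set n (((κs.getD i []).getD n []).set j v))

def getThis (P : Program) (X : Heap) : Value → Option (ClassId × List PoolAddr)
  | .obj ω => (X ω).bind fun e => match e with
      | .inl o => some (o.cls, o.params)
      | .inr _ => none
  | .loc π _ => (X π).bind fun e => match e with
      | .inr p => (layoutClass P p.layout).map fun C => (C, p.params)
      | .inl _ => none
  | .null => none

/-- The frame a method starts with: `this`, the parameter, and the class pool params. -/
def methodFrame (md : MethodDecl) (thisv : Value) (arg : RVal)
    (ownersC : List VarId) (πs : List PoolAddr) : Frame :=
  fun z =>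
    if z = thisVar then some (.val thisv)
    else if z = md.param then some arg
    else match ownersC.idxOf? z with
      | some i => some (.pool (πs.getD i none))
      | none => none

/-- Extend a method frame with its local pool and object variables. -/
def extendDecls (Φ : Frame) (πas : List ℕ) (md : MethodDecl) : Frame :=
  fun z =>
    match (md.pools.map (·.1)).idxOf? z with
    | some i => some (.pool (some (πas.getD i 0)))
    | none => match (md.locals.map (·.1)).idxOf? z with
      | some _ => some (.val .null)
      | none => Φ z

/-- Big-step operational semantics of SHAPES. -/
inductive Red (P : Program) : Heap → Frame → Expr → Heap → Frame → Value → Prop where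
  | nullR : ∀ X Φ, Red P X Φ .null X Φ .null
  | varR : ∀ X Φ x v, Φ x = some (.val v) → Red P X Φ (.var x) X Φ v
  | assignR : ∀ X Φ x e X' Φ' v, Red P X Φ e X' Φ' v →
      Red P X Φ (.assign x e) X' (updFrame Φ' x (.val v)) v
  | newObjR : ∀ X Φ C ys πs ω cd,
      ys.mapM (poolOf Φ) = some πs → πs.head? = some none →
      X ω = none → P.classes C = some cd →
      Red P X Φ (.newE C ys)
        (updHeap X ω (.inl ⟨C, πs, List.replicate cd.fields.length .null⟩)) Φ (.obj ω)
  | newPoolR : ∀ X Φ C ys πs π p ld,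
      ys.mapM (poolOf Φ) = some πs → πs.head? = some (some π) →
      X π = some (.inr p) → P.layouts p.layout = some ld →
      Red P X Φ (.newE C ys)
        (updHeap X π (.inr ⟨p.layout, p.params, appendNulls p.clusters ld.clusters⟩))
        Φ (.loc π (p.clusters.headD []).length)
  | readObjR : ∀ X Φ x f ω o cd i,
      Φ x = some (.val (.obj ω)) → X ω = some (.inl o) →
      P.classes o.cls = some cd → offsetC cd f = some i →
      Red P X Φ (.read x f) X Φ (o.record.getD i .null)
  | readPoolR : ∀ X Φ x f π n p ld i j,
      Φ x = some (.val (.loc π n)) → X π = some (.inr p) →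
      P.layouts p.layout = some ld → offsetL ld f = some (i, j) →
      Red P X Φ (.read x f) X Φ (cluster3 p.clusters i n j)
  | writeObjR : ∀ X Φ x f x' ω o cd i v,
      Φ x = some (.val (.obj ω)) → Φ x' = some (.val v) →
      X ω = some (.inl o) → P.classes o.cls = some cd → offsetC cd f = some i →
      Red P X Φ (.write x f x')
        (updHeap X ω (.inl ⟨o.cls, o.params, o.record.set i v⟩)) Φ v
  | writePoolR : ∀ X Φ x f x' π n p ld i j v,
      Φ x = some (.val (.loc π n)) → Φ x' = some (.val v) →
      X π = some (.inr p) → P.layouts p.layout = some ld → offsetL ld f = some (i, j) →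
      Red P X Φ (.write x f x')
        (updHeap X π (.inr ⟨p.layout, p.params, setCluster p.clusters i n j v⟩)) Φ v
  | callR : ∀ X Φ x m x'' v arg C πs cd md Φ₀ πas Φ₁ (X₁ : Heap) X' Φ' v',
      Φ x = some (.val v) →
      getThis P X v = some (C, πs) →
      P.classes C = some cd → mlookup cd m = some md →
      Φ x'' = some arg →
      Φ₀ = methodFrame md v arg (owners cd) πs →
      πas.length = md.pools.length → πas.Nodup →
      (∀ π ∈ πas, X π = none) →
      Φ₁ = extendDecls Φ₀ πas md →
      (∀ i (h : i < md.pools.length),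
        ∃ ld πs', P.layouts (md.pools.get ⟨i, h⟩).2.1 = some ld ∧
          ((md.pools.get ⟨i, h⟩).2.2).mapM (poolOf Φ₁) = some πs' ∧
          X₁ (πas.getD i 0) = some (.inr ⟨(md.pools.get ⟨i, h⟩).2.1, πs',
            List.replicate ld.clusters.length []⟩)) →
      (∀ a, a ∉ πas → X₁ a = X a) →
      Red P X₁ Φ₁ md.body X' Φ' v' →
      Red P X Φ (.call x m x'') X' Φ v'

/-- The typing context arising from a class's pool parameter declarations. -/
def ctxOfClass (cd : ClassDecl) : Ctx :=
  fun z => (cd.params.find? (fun p => p.1 == z)).map fun p => Ty.bound p.2.1 p.2.2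

/-- The typing context used to check a method body. -/
def ctxOfMethod (C : ClassId) (cd : ClassDecl) (md : MethodDecl) : Ctx :=
  fun z =>
    if z = thisVar then some (.obj C (cd.params.map fun p => some p.1))
    else if z = md.param then some (.obj md.paramTy.1 md.paramTy.2)
    else match md.pools.find? (fun p => p.1 == z) with
    | some p => some (.pool p.2.1 p.2.2)
    | none => match md.locals.find? (fun l => l.1 == z) with
      | some l => some (.obj l.2.1 l.2.2)
      | none => ctxOfClass cd z

/-- A layout declaration is well-formed for a class: its clusters are a
disjoint partition of the class's fields. -/
def wfLayoutDecl (cd : ClassDecl) (ld : LayoutDecl) : Prop :=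
  ld.clusters.flatten.Perm (fieldsOf cd) ∧ ∀ κ ∈ ld.clusters, κ.Nodup

def wfClassDecl (P : Program) (C : ClassId) (cd : ClassDecl) : Prop :=
  WfBound P (ctxOfClass cd) C (cd.params.map fun p => some p.1) ∧
  (∀ fd ∈ cd.fields, WfObjTy P (ctxOfClass cd) fd.2.1 fd.2.2) ∧
  ∀ md ∈ cd.methods,
    WfObjTy P (ctxOfClass cd) md.paramTy.1 md.paramTy.2 ∧
    WfObjTy P (ctxOfClass cd) md.retTy.1 md.retTy.2 ∧
    HasTy P (ctxOfMethod C cd md) md.body md.retTy.1 md.retTy.2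

def wfProgram (P : Program) : Prop :=
  (∀ C cd, P.classes C = some cd → wfClassDecl P C cd) ∧
  (∀ L ld, P.layouts L = some ld →
    ∃ cd, P.classes ld.cls = some cd ∧ wfLayoutDecl cd ld)

/-! The write changes one slot `(i, n, j)` of the pool at `π` and nothing that weak agreement
can see: object headers and the layouts and parameters of pools stay as they were (`ShapeLE`).
Hence every agreement fact about other addresses, and every agreement of the frame, carries over
to the new heap. At `π` only the slot of the field `f` in record `n` changes (`offsetL` is
injective), and the typings of `x` and `x'` show that the written value weakly agrees with the
type of `f` instantiated at the pool's parameters. -/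

def ShapeLE (X X' : Heap) : Prop :=
  (∀ b o, X b = some (.inl o) → X' b = some (.inl o)) ∧
  (∀ b q, X b = some (.inr q) → ∃ q', X' b = some (.inr q') ∧
    q'.layout = q.layout ∧ q'.params = q.params)

section ShapeLE

variable {P : Program} {X X' : Heap}

lemma wagreeVal_mono (h : ShapeLE X X') {v C πs} :
    wagreeVal P X v C πs → wagreeVal P X' v C πs := by
  cases v with
  | null => exact id
  | obj ω => rintro ⟨o, ho, rest⟩; exact ⟨o, h.1 _ _ ho, rest⟩
  | loc π n =>
    rintro ⟨q, hq, hparams, hhead, hcls⟩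
    obtain ⟨q', hq', hl, hpr⟩ := h.2 _ _ hq
    exact ⟨q', hq', hpr.trans hparams, hhead, by rwa [layoutClass, hl, ← layoutClass]⟩

lemma wagreeBound_mono (h : ShapeLE X X') {π C πs} :
    wagreeBound P X π C πs → wagreeBound P X' π C πs := by
  cases π with
  | none => exact id
  | some π =>
    rintro ⟨q, hq, hparams, hhead, hcls⟩
    obtain ⟨q', hq', hl, hpr⟩ := h.2 _ _ hq
    exact ⟨q', hq', hpr.trans hparams, hhead, by rwa [layoutClass, hl, ← layoutClass]⟩

lemma wagreePoolTy_mono (h : ShapeLE X X') {π L πs} :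
    wagreePoolTy P X π L πs → wagreePoolTy P X' π L πs := by
  rintro ⟨π₀, q, hhead, hq, hlayout, hparams⟩
  obtain ⟨q', hq', hl, hpr⟩ := h.2 _ _ hq
  exact ⟨π₀, q', hhead, hq', hl.trans hlayout, hpr.trans hparams⟩

lemma paramsAgree_mono (h : ShapeLE X X') {cd πs} :
    paramsAgree P X cd πs → paramsAgree P X' cd πs :=
  fun hpar k hk => wagreeBound_mono h (hpar k hk)

lemma agreeTy_mono (h : ShapeLE X X') {Φ r T} :
    agreeTy P X Φ r T → agreeTy P X' Φ r T := by
  cases T with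
  | obj C ys => rintro ⟨v, πs, hr, hys, hv⟩; exact ⟨v, πs, hr, hys, wagreeVal_mono h hv⟩
  | pool L ys => rintro ⟨π, πs, hr, hys, hπ⟩; exact ⟨π, πs, hr, hys, wagreePoolTy_mono h hπ⟩
  | bound C ys => rintro ⟨π, πs, hr, hys, hπ⟩; exact ⟨π, πs, hr, hys, wagreeBound_mono h hπ⟩

lemma sagreeObjAddr_mono (h : ShapeLE X X') {a C πs} (ha : X' a = X a) :
    sagreeObjAddr P X a C πs → sagreeObjAddr P X' a C πs := by
  rintro ⟨o, cd, ho, hcls, hparams, hhead, hcd, hpar, hfields⟩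
  exact ⟨o, cd, ha.trans ho, hcls, hparams, hhead, hcd, paramsAgree_mono h hpar,
    fun k hk => wagreeVal_mono h (hfields k hk)⟩

lemma sagreeLoc_mono (h : ShapeLE X X') {π n C πs} (hπ : X' π = X π) :
    sagreeLoc P X π n C πs → sagreeLoc P X' π n C πs := by
  rintro ⟨q, cd, ld, hq, hparams, hhead, hld, hcls, hcd, hslots⟩
  exact ⟨q, cd, ld, hπ.trans hq, hparams, hhead, hld, hcls, hcd,
    fun f i j D zs hoff hfl => wagreeVal_mono h (hslots f i j D zs hoff hfl)⟩

lemma sagreePoolAddr_mono (h : ShapeLE X X') {π L πs} (hπ : X' π = X π) :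
    sagreePoolAddr P X π L πs → sagreePoolAddr P X' π L πs := by
  rintro ⟨q, ld, cd, hq, hlayout, hparams, hhead, hld, hcd, hpar, hrect, hlocs⟩
  exact ⟨q, ld, cd, hπ.trans hq, hlayout, hparams, hhead, hld, hcd, paramsAgree_mono h hpar,
    hrect, fun m hm => sagreeLoc_mono h hπ (hlocs m hm)⟩

lemma wfConfig_mono (h : ShapeLE X X') {Γ Φ} (hX' : wfHeap P X') :
    wfConfig P Γ X Φ → wfConfig P Γ X' Φ := by
  rintro ⟨-, hdom, hagree⟩
  refine ⟨hX', hdom, fun z T hT => ?_⟩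
  obtain ⟨r, hr, hrT⟩ := hagree z T hT
  exact ⟨r, hr, agreeTy_mono h hrT⟩

end ShapeLE

lemma shapeLE_updHeap_clusters {X : Heap} {π : ℕ} {p : Pool} (hp : X π = some (.inr p))
    (κs : List (List (List Value))) : ShapeLE X (updHeap X π (.inr ⟨p.layout, p.params, κs⟩)) := by
  constructor
  · intro b o hb
    have hbπ : b ≠ π := by rintro rfl; simp [hp] at hb
    simpa [updHeap, hbπ] using hb
  · intro b q hb
    by_cases hbπ : b = π
    · subst hbπ
      obtain rfl : p = q := by simpa [hp] using hb
      exact ⟨⟨p.layout, p.params, κs⟩, by simp [updHeap], rfl, rfl⟩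
    · exact ⟨q, by simpa [updHeap, hbπ] using hb, rfl, rfl⟩

lemma wfHeap_updHeap {P : Program} {X : Heap} {a : ℕ} {e : Obj ⊕ Pool} (hX : wfHeap P X)
    (hsim : ShapeLE X (updHeap X a e))
    (ha : (∃ C πs, sagreeObjAddr P (updHeap X a e) a C πs) ∨
      (∃ L πs, sagreePoolAddr P (updHeap X a e) a L πs)) :
    wfHeap P (updHeap X a e) := by
  intro b e' hb
  by_cases hba : b = a
  · exact hba ▸ ha
  have hXb : updHeap X a e b = X b := by simp [updHeap, hba]
  rcases hX b e' (hXb ▸ hb) with ⟨C, πs, hobj⟩ | ⟨L, πs, hpool⟩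
  · exact Or.inl ⟨C, πs, sagreeObjAddr_mono hsim hXb hobj⟩
  · exact Or.inr ⟨L, πs, sagreePoolAddr_mono hsim hXb hpool⟩

lemma exists_sagreePoolAddr {P : Program} {X : Heap} {π : ℕ} {p : Pool} (hX : wfHeap P X)
    (hp : X π = some (.inr p)) : ∃ L πs, sagreePoolAddr P X π L πs := by
  refine (hX π _ hp).resolve_left ?_
  rintro ⟨C, πs, o, cd, ho, -⟩
  simp [hp] at ho

section Frame

variable {Φ : Frame} {ys : List PoolVar} {πs : List PoolAddr}

lemma poolOf_getD_of_mapM (h : ys.mapM (poolOf Φ) = some πs) (k : ℕ) :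
    poolOf Φ (ys.getD k none) = some (πs.getD k none) := by
  induction ys generalizing πs k with
  | nil =>
    obtain rfl : πs = [] := by simpa using h.symm
    rfl
  | cons y ys ih =>
    simp only [List.mapM_cons, Option.bind_eq_bind, Option.bind_eq_some_iff, pure,
      Option.some.injEq] at h
    obtain ⟨π, hy, πs, hys, rfl⟩ := h
    cases k with
    | zero => exact hy
    | succ k => exact ih hys k

lemma poolOf_substPV (h : ys.mapM (poolOf Φ) = some πs) (fs : List VarId) (z : PoolVar) :
    poolOf Φ (substPV fs ys z) = some (substPA fs πs z) := by
  rcases z with _ | y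
  · rfl
  · simp only [substPV, substPA]
    cases fs.idxOf? y with
    | none => rfl
    | some k => exact poolOf_getD_of_mapM h k

lemma mapM_poolOf_map_substPV (h : ys.mapM (poolOf Φ) = some πs) (fs : List VarId)
    (zs : List PoolVar) :
    (zs.map (substPV fs ys)).mapM (poolOf Φ) = some (zs.map (substPA fs πs)) := by
  rw [List.mapM_map, show poolOf Φ ∘ substPV fs ys = fun z => pure (substPA fs πs z) from
    funext (poolOf_substPV h fs)]
  exact List.mapM_pure

lemma wfConfig.exists_wagreeVal {P : Program} {Γ : Ctx} {X : Heap} {x : VarId} {C : ClassId}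
    {v : Value} (hwf : wfConfig P Γ X Φ) (hx : Γ x = some (.obj C ys))
    (hΦ : Φ x = some (.val v)) : ∃ πs, ys.mapM (poolOf Φ) = some πs ∧ wagreeVal P X v C πs := by
  obtain ⟨r, hr, v', πs, rfl, hys, hv⟩ := hwf.2.2 x _ hx
  obtain rfl : v' = v := by simpa [hΦ] using hr.symm
  exact ⟨πs, hys, hv⟩

end Frame

lemma getElem?_getD_of_offsetL {ld : LayoutDecl} {f : FieldId} {i j : ℕ}
    (h : offsetL ld f = some (i, j)) : (ld.clusters.getD i [])[j]? = some f := by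
  simp only [offsetL, Option.bind_eq_some_iff, Option.map_eq_some_iff, Prod.mk.injEq] at h
  obtain ⟨i, -, j, hj, rfl, rfl⟩ := h
  obtain ⟨hjlt, hget, -⟩ := List.idxOf?_eq_some_iff.mp hj
  rw [List.getElem?_eq_getElem hjlt, hget]

lemma offsetL_inj {ld : LayoutDecl} {f₁ f₂ : FieldId} {i j : ℕ}
    (h₁ : offsetL ld f₁ = some (i, j)) (h₂ : offsetL ld f₂ = some (i, j)) : f₁ = f₂ :=
  Option.some_injective _ ((getElem?_getD_of_offsetL h₁).symm.trans (getElem?_getD_of_offsetL h₂))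

section setCluster

variable {κs : List (List (List Value))} {i n j : ℕ} {w : Value}

lemma cluster3_setCluster (i' n' j' : ℕ) :
    cluster3 (setCluster κs i n j w) i' n' j' = cluster3 κs i' n' j' ∨
      (i' = i ∧ n' = n ∧ j' = j) ∧ cluster3 (setCluster κs i n j w) i' n' j' = w := by
  grind [cluster3, setCluster]

lemma map_length_setCluster :
    (setCluster κs i n j w).map List.length = κs.map List.length := by
  rw [setCluster, List.map_set, List.length_set]
  by_cases hi : i < κs.length
  · rw [List.getD_eq_getElem?_getD, List.getElem?_eq_getElem hi, Option.getD_some,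
      ← List.getElem_map List.length (h := by simpa using hi), List.set_getElem_self]
  · rw [List.set_eq_of_length_le (by simpa using hi)]

lemma headD_length_setCluster :
    ((setCluster κs i n j w).headD []).length = (κs.headD []).length := by
  rw [← List.headD_map (f := List.length), ← List.headD_map (f := List.length),
    map_length_setCluster]

lemma setCluster_rectangular (h : ∀ κ ∈ κs, κ.length = (κs.headD []).length) :
    ∀ κ ∈ setCluster κs i n j w, κ.length = ((setCluster κs i n j w).headD []).length := by
  intro κ hκ
  have hlen : κ.length ∈ κs.map List.length :=
    map_length_setCluster ▸ List.mem_map_of_mem hκ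
  obtain ⟨κ₀, hκ₀, hlen⟩ := List.mem_map.mp hlen
  rw [headD_length_setCluster, ← hlen, h κ₀ hκ₀]

end setCluster

section WritePool

variable {P : Program} {X : Heap} {π : ℕ} {p : Pool} {ld : LayoutDecl} {cd : ClassDecl}
  {i n j : ℕ} {w : Value}

lemma sagreeLoc_setCluster (hp : X π = some (.inr p)) (hld : P.layouts p.layout = some ld)
    (hcd : P.classes ld.cls = some cd)
    (hslot : ∀ f D zs, offsetL ld f = some (i, j) → flookup cd f = some (D, zs) →
      wagreeVal P X w D (zs.map (substPA (owners cd) p.params)))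
    {m : ℕ} (h : sagreeLoc P X π m ld.cls p.params) :
    sagreeLoc P (updHeap X π (.inr ⟨p.layout, p.params, setCluster p.clusters i n j w⟩))
      π m ld.cls p.params := by
  have hsim := shapeLE_updHeap_clusters hp (setCluster p.clusters i n j w)
  obtain ⟨p₁, cd₁, ld₁, hp₁, -, hhead, hld₁, -, hcd₁, hslots⟩ := h
  obtain rfl : p = p₁ := by simpa [hp] using hp₁
  obtain rfl : ld = ld₁ := by simpa [hld] using hld₁
  obtain rfl : cd = cd₁ := by simpa [hcd] using hcd₁
  refine ⟨⟨p.layout, p.params, setCluster p.clusters i n j w⟩, cd, ld, by simp [updHeap], rfl,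
    hhead, hld, rfl, hcd, fun f i' j' D zs hoff hfl => ?_⟩
  rcases cluster3_setCluster (κs := p.clusters) (i := i) (n := n) (j := j) (w := w) i' m j' with
    hold | ⟨⟨rfl, rfl, rfl⟩, hnew⟩
  · rw [hold]
    exact wagreeVal_mono hsim (hslots f i' j' D zs hoff hfl)
  · rw [hnew]
    exact wagreeVal_mono hsim (hslot f D zs hoff hfl)

lemma sagreePoolAddr_setCluster (hp : X π = some (.inr p)) (hld : P.layouts p.layout = some ld)
    (hcd : P.classes ld.cls = some cd)
    (hslot : ∀ f D zs, offsetL ld f = some (i, j) → flookup cd f = some (D, zs) →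
      wagreeVal P X w D (zs.map (substPA (owners cd) p.params)))
    {L : LayoutId} {πs : List PoolAddr} (h : sagreePoolAddr P X π L πs) :
    sagreePoolAddr P (updHeap X π (.inr ⟨p.layout, p.params, setCluster p.clusters i n j w⟩))
      π L πs := by
  obtain ⟨p₁, ld₁, cd₁, hp₁, rfl, rfl, hhead, hld₁, hcd₁, hpar, hrect, hlocs⟩ := h
  obtain rfl : p = p₁ := by simpa [hp] using hp₁
  obtain rfl : ld = ld₁ := by simpa [hld] using hld₁
  obtain rfl : cd = cd₁ := by simpa [hcd] using hcd₁
  exact ⟨⟨p.layout, p.params, setCluster p.clusters i n j w⟩, ld, cd, by simp [updHeap], rfl,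
    rfl, hhead, hld, hcd, paramsAgree_mono (shapeLE_updHeap_clusters hp _) hpar,
    setCluster_rectangular hrect,
    fun m hm => sagreeLoc_setCluster hp hld hcd hslot (hlocs m (headD_length_setCluster ▸ hm))⟩

end WritePool

/-- Type preservation for field write on pooled objects: if `(Γ, X, Φ)` is
well-formed, `Γ` types `x` at `C<ys>` and `x'` at the substituted type of
field `f`, `Φ x = (π, n)`, and the write rule updates the heap to `X'` by
setting `κs[i][n][j] := Φ x'` where `(i, j) = W(L, f)`, then `X'` is a
well-formed heap and `(Γ, X', Φ)` is well-formed. -/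
theorem write_pool_preservation (P : Program) (Γ : Ctx) (X X' : Heap)
    (Φ : Frame) (x x' : VarId) (f : FieldId) (C : ClassId) (ys : List PoolVar)
    (cd : ClassDecl) (D : ClassId) (zs : List PoolVar)
    (π n : ℕ) (p : Pool) (ld : LayoutDecl) (i j : ℕ) (w : Value)
    (hwf : wfConfig P Γ X Φ)
    (hx : Γ x = some (.obj C ys))
    (hcd : P.classes C = some cd)
    (hfl : flookup cd f = some (D, zs))
    (hx' : Γ x' = some (.obj D (zs.map (substPV (owners cd) ys))))
    (hΦ : Φ x = some (.val (.loc π n)))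
    (hΦ' : Φ x' = some (.val w))
    (hp : X π = some (.inr p))
    (hld : P.layouts p.layout = some ld)
    (hoff : offsetL ld f = some (i, j))
    (hX' : X' = updHeap X π (.inr ⟨p.layout, p.params, setCluster p.clusters i n j w⟩)) :
    wfHeap P X' ∧ wfConfig P Γ X' Φ := by
  subst hX'
  obtain ⟨πs, hys, p₁, hp₁, rfl, -, hlayC⟩ := hwf.exists_wagreeVal hx hΦ
  obtain rfl : p = p₁ := by simpa [hp] using hp₁
  have hldC : ld.cls = C := by simpa [layoutClass, hld] using hlayC
  obtain ⟨πs', hzs, hw⟩ := hwf.exists_wagreeVal hx' hΦ'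
  obtain rfl := Option.some_inj.mp ((mapM_poolOf_map_substPV hys _ zs).symm.trans hzs)
  have hslot : ∀ f' D' zs', offsetL ld f' = some (i, j) → flookup cd f' = some (D', zs') →
      wagreeVal P X w D' (zs'.map (substPA (owners cd) p.params)) := by
    intro f' D' zs' hoff' hfl'
    obtain rfl := offsetL_inj hoff' hoff
    obtain ⟨rfl, rfl⟩ : D = D' ∧ zs = zs' := by simpa [hfl] using hfl'
    exact hw
  have hsim := shapeLE_updHeap_clusters hp (setCluster p.clusters i n j w)
  obtain ⟨L, πs, hpool⟩ := exists_sagreePoolAddr hwf.1 hp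
  have hX' := wfHeap_updHeap hwf.1 hsim
    (Or.inr ⟨L, πs, sagreePoolAddr_setCluster hp hld (hldC ▸ hcd) hslot hpool⟩)
  exact ⟨hX', wfConfig_mono hsim hX' hwf⟩

end Shapes
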